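/- With c₄ = (-1,-1,-1,1) (so that c₄ = ⅓d₁ + ⅓d₂ + ⅓d₃ lies on the 3-dimensional cone cone(d₁,d₂,d₃)), the cone σ₁₉ = cone(d₁,d₂,d₃,d₄) equals the union cone(c₄,d₂,d₃,d₄) ∪ cone(d₁,c₄,d₃,d₄) ∪ cone(d₁,d₂,c₄,d₄), and each of these three cones has generator matrix (columns in the listed order) of determinant 1. -/

import Mathlib

/-!
Every point `a d₁ + b d₂ + c d₃ + d d₄` of `σ₁₉` with, say, `a = min (a, b, c)` equals
`3a c₄ + (b - a) d₂ + (c - a) d₃ + d d₄`, so it lies in the subcone where `c₄` replaces `d₁`;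
conversely `c₄ ∈ σ₁₉`, so each subcone lies in `σ₁₉`. Replacing a generator by `c₄` scales the
determinant by `1/3` (multilinearity), and `det (d₁, d₂, d₃, d₄) = 3`.
-/

open Matrix

noncomputable section

def d1 : Fin 4 → ℝ := ![-1, 0, -2, 1]
def d2 : Fin 4 → ℝ := ![-2, -1, 0, 1]
def d3 : Fin 4 → ℝ := ![0, -2, -1, 1]
def d4 : Fin 4 → ℝ := ![1, 0, 1, -1]
def c4 : Fin 4 → ℝ := ![-1, -1, -1, 1]

/-- The cone generated by four vectors: all nonnegative linear combinations. -/
def cone4 (v1 v2 v3 v4 : Fin 4 → ℝ) : Set (Fin 4 → ℝ) :=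
  {x | ∃ a b c d : ℝ, 0 ≤ a ∧ 0 ≤ b ∧ 0 ≤ c ∧ 0 ≤ d ∧
    x = a • v1 + b • v2 + c • v3 + d • v4}

/-- The 4×4 matrix whose columns are `v1, v2, v3, v4` (in this order). -/
def colMat (v1 v2 v3 v4 : Fin 4 → ℝ) : Matrix (Fin 4) (Fin 4) ℝ :=
  (Matrix.of ![v1, v2, v3, v4])ᵀ

section Determinant

variable {n R : Type*} [DecidableEq n] [Fintype n] [CommRing R]

theorem det_updateRow_smul_add_smul_add_smul (M : Matrix n n R) {i j k : n} (hij : i ≠ j)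
    (hik : i ≠ k) (a b c : R) :
    (M.updateRow i (a • M i + b • M j + c • M k)).det = a * M.det := by
  simp only [det_updateRow_add, det_updateRow_smul, det_updateRow_eq_zero hij.symm,
    det_updateRow_eq_zero hik.symm, updateRow_eq_self]
  ring

variable {v1 v2 v3 v4 w : Fin 4 → ℝ} {t : ℝ}

theorem det_colMat (v1 v2 v3 v4 : Fin 4 → ℝ) :
    (colMat v1 v2 v3 v4).det = (of ![v1, v2, v3, v4]).det :=
  det_transpose _

theorem det_colMat_of_eq_smul_add (hw : w = t • v1 + t • v2 + t • v3) :
    (colMat w v2 v3 v4).det = t * (colMat v1 v2 v3 v4).det ∧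
    (colMat v1 w v3 v4).det = t * (colMat v1 v2 v3 v4).det ∧
    (colMat v1 v2 w v4).det = t * (colMat v1 v2 v3 v4).det := by
  simp only [det_colMat]
  set M := of ![v1, v2, v3, v4]
  refine ⟨?_, ?_, ?_⟩
  · rw [hw, ← det_updateRow_smul_add_smul_add_smul M (i := 0) (j := 1) (k := 2) (by decide)
      (by decide) t t t]
    congr 1; ext i j; fin_cases i <;> rfl
  · rw [show w = t • v2 + t • v1 + t • v3 by rw [hw]; abel,
      ← det_updateRow_smul_add_smul_add_smul M (i := 1) (j := 0) (k := 2) (by decide)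
      (by decide) t t t]
    congr 1; ext i j; fin_cases i <;> rfl
  · rw [show w = t • v3 + t • v1 + t • v2 by rw [hw]; abel,
      ← det_updateRow_smul_add_smul_add_smul M (i := 2) (j := 0) (k := 1) (by decide)
      (by decide) t t t]
    congr 1; ext i j; fin_cases i <;> rfl

end Determinant

section Cone

variable {v1 v2 v3 v4 w : Fin 4 → ℝ} {t : ℝ}

theorem cone4_swap12 (v1 v2 v3 v4 : Fin 4 → ℝ) : cone4 v2 v1 v3 v4 = cone4 v1 v2 v3 v4 := by
  ext x
  constructor <;> rintro ⟨a, b, c, d, ha, hb, hc, hd, rfl⟩ <;>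
    exact ⟨b, a, c, d, hb, ha, hc, hd, by abel⟩

theorem cone4_swap13 (v1 v2 v3 v4 : Fin 4 → ℝ) : cone4 v3 v2 v1 v4 = cone4 v1 v2 v3 v4 := by
  ext x
  constructor <;> rintro ⟨a, b, c, d, ha, hb, hc, hd, rfl⟩ <;>
    exact ⟨c, b, a, d, hc, hb, ha, hd, by abel⟩

theorem mem_cone4_of_eq_smul_add (ht : 0 ≤ t) (hw : w = t • v1 + t • v2 + t • v3) :
    w ∈ cone4 v1 v2 v3 v4 :=
  ⟨t, t, t, 0, ht, ht, ht, le_rfl, by rw [hw]; module⟩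

theorem cone4_subset_of_mem (hw : w ∈ cone4 v1 v2 v3 v4) :
    cone4 w v2 v3 v4 ⊆ cone4 v1 v2 v3 v4 := by
  obtain ⟨p, q, r, s, hp, hq, hr, hs, rfl⟩ := hw
  rintro _ ⟨a, b, c, d, ha, hb, hc, hd, rfl⟩
  exact ⟨a * p, a * q + b, a * r + c, a * s + d, by positivity, by positivity, by positivity,
    by positivity, by module⟩

theorem mem_cone4_of_le {a b c d : ℝ} (ht : 0 < t) (hw : w = t • v1 + t • v2 + t • v3)
    (ha : 0 ≤ a) (hab : a ≤ b) (hac : a ≤ c) (hd : 0 ≤ d) :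
    a • v1 + b • v2 + c • v3 + d • v4 ∈ cone4 w v2 v3 v4 := by
  refine ⟨a / t, b - a, c - a, d, by positivity, by linarith, by linarith, hd, ?_⟩
  rw [hw]
  match_scalars <;> field_simp <;> ring

theorem cone4_subset_union (ht : 0 < t) (hw : w = t • v1 + t • v2 + t • v3) :
    cone4 v1 v2 v3 v4 ⊆ cone4 w v2 v3 v4 ∪ cone4 v1 w v3 v4 ∪ cone4 v1 v2 w v4 := by
  have hw₂ : w = t • v2 + t • v1 + t • v3 := by rw [hw]; abel
  have hw₃ : w = t • v3 + t • v2 + t • v1 := by rw [hw]; abel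
  rintro _ ⟨a, b, c, d, ha, hb, hc, hd, rfl⟩
  have second (hba : b ≤ a) (hbc : b ≤ c) :
      a • v1 + b • v2 + c • v3 + d • v4 ∈ cone4 v1 w v3 v4 := by
    rw [← cone4_swap12]
    convert mem_cone4_of_le ht hw₂ hb hba hbc hd using 1
    abel
  have third (hca : c ≤ a) (hcb : c ≤ b) :
      a • v1 + b • v2 + c • v3 + d • v4 ∈ cone4 v1 v2 w v4 := by
    rw [← cone4_swap13]
    convert mem_cone4_of_le ht hw₃ hc hcb hca hd using 1
    abel
  rcases le_total a b with hab | hba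
  · rcases le_total a c with hac | hca
    · exact .inl (.inl (mem_cone4_of_le ht hw ha hab hac hd))
    · exact .inr (third hca (hca.trans hab))
  · rcases le_total b c with hbc | hcb
    · exact .inl (.inr (second hba hbc))
    · exact .inr (third (hcb.trans hba) hcb)

theorem union_subset_cone4 (ht : 0 ≤ t) (hw : w = t • v1 + t • v2 + t • v3) :
    cone4 w v2 v3 v4 ∪ cone4 v1 w v3 v4 ∪ cone4 v1 v2 w v4 ⊆ cone4 v1 v2 v3 v4 := by
  refine Set.union_subset (Set.union_subset ?_ ?_) ?_
  · exact cone4_subset_of_mem (mem_cone4_of_eq_smul_add ht hw)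
  · rw [← cone4_swap12, ← cone4_swap12 v1]
    exact cone4_subset_of_mem (mem_cone4_of_eq_smul_add ht (by rw [hw]; abel))
  · rw [← cone4_swap13, ← cone4_swap13 v1]
    exact cone4_subset_of_mem (mem_cone4_of_eq_smul_add ht (by rw [hw]; abel))

theorem cone4_eq_union (ht : 0 < t) (hw : w = t • v1 + t • v2 + t • v3) :
    cone4 v1 v2 v3 v4 = cone4 w v2 v3 v4 ∪ cone4 v1 w v3 v4 ∪ cone4 v1 v2 w v4 :=
  (cone4_subset_union ht hw).antisymm (union_subset_cone4 ht.le hw)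

end Cone

theorem det_colMat_d1_d2_d3_d4 : (colMat d1 d2 d3 d4).det = 3 := by
  rw [det_colMat, det_succ_row_zero]
  simp [Fin.sum_univ_succ, det_fin_three, Fin.succAbove, d1, d2, d3, d4]
  norm_num

theorem subdivision_of_sigma19 :
    c4 = (1/3 : ℝ) • d1 + (1/3 : ℝ) • d2 + (1/3 : ℝ) • d3 ∧
    cone4 d1 d2 d3 d4 =
      cone4 c4 d2 d3 d4 ∪
      cone4 d1 c4 d3 d4 ∪
      cone4 d1 d2 c4 d4 ∧
    (colMat c4 d2 d3 d4).det = 1 ∧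
    (colMat d1 c4 d3 d4).det = 1 ∧
    (colMat d1 d2 c4 d4).det = 1 := by
  have hc4 : c4 = (1/3 : ℝ) • d1 + (1/3 : ℝ) • d2 + (1/3 : ℝ) • d3 := by
    ext i; fin_cases i <;> norm_num [d1, d2, d3, c4]
  obtain ⟨h₁, h₂, h₃⟩ := det_colMat_of_eq_smul_add (v4 := d4) hc4
  rw [det_colMat_d1_d2_d3_d4] at h₁ h₂ h₃
  norm_num at h₁ h₂ h₃
  exact ⟨hc4, cone4_eq_union (by norm_num) hc4, h₁, h₂, h₃⟩
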